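/- arXiv:1907.04809 — 3 statements merged into one kernel-verified Lean document; each statement's English description precedes it below -/
import Mathlib

section
/- Let Z ⊆ ℝⁿ be an open connected set and let v: Z → ℝⁿ be an injective, continuously differentiable map whose Jacobian matrix J_v(z) is invertible at every z ∈ Z. Suppose that for every z ∈ Z, every component index a, and every pair of distinct coordinate indices s ≠ t, the product of partial derivatives satisfies (∂v_a/∂z_s)(z) · (∂v_a/∂z_t)(z) = 0; that is, each row of the Jacobian of v has at most one nonzero entry at each point. Then the locations of the nonzero entries are fixed across Z: there exists a permutation σ of {1, …, n} such that for every a, the component v_a depends only on the coordinate z_{σ(a)}, i.e., ∂v_a/∂z_s ≡ 0 on Z for all s ≠ σ(a). -/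
open MeasureTheory

/-- **Lemma: constancy of the sparsity pattern of an everywhere-invertible Jacobian.**
If `v` is injective and `C¹` on an open connected set `Z`, its Jacobian is invertible at every
point of `Z`, and each row of the Jacobian has at most one nonzero entry at each point (the
product of any two distinct partial derivatives of a component vanishes), then there is a single
permutation `σ` such that on all of `Z`, component `v_a` depends only on the coordinate
`z_{σ(a)}`. -/
theorem jacobian_sparsity_pattern_constant
    (n : ℕ) (Z : Set (Fin n → ℝ)) (hZopen : IsOpen Z) (hZconn : IsConnected Z)
    (v : (Fin n → ℝ) → (Fin n → ℝ))
    (hinj : Set.InjOn v Z) (hC1 : ContDiffOn ℝ 1 v Z)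
    (hJinv : ∀ z ∈ Z,
      IsUnit (Matrix.of fun a s : Fin n => fderiv ℝ v z (Pi.single s 1) a).det)
    (hprod : ∀ z ∈ Z, ∀ (a s t : Fin n), s ≠ t →
      fderiv ℝ v z (Pi.single s 1) a * fderiv ℝ v z (Pi.single t 1) a = 0) :
    ∃ σ : Equiv.Perm (Fin n), ∀ z ∈ Z, ∀ a s : Fin n, s ≠ σ a →
      fderiv ℝ v z (Pi.single s 1) a = 0 := by
  classical
  -- continuity of the Jacobian entries on `Z`
  have hf : ContinuousOn (fderiv ℝ v) Z := hC1.continuousOn_fderiv_of_isOpen hZopen le_rfl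
  have hcont : ∀ a s : Fin n, ContinuousOn (fun z => fderiv ℝ v z (Pi.single s 1) a) Z := by
    intro a s
    exact (continuous_apply a).comp_continuousOn
      (((ContinuousLinearMap.apply ℝ (Fin n → ℝ) (Pi.single s 1)).continuous).comp_continuousOn hf)
  -- at each point, there is a permutation describing the sparsity pattern
  have key : ∀ z ∈ Z, ∃ σ : Equiv.Perm (Fin n), ∀ a s, s ≠ σ a →
      fderiv ℝ v z (Pi.single s 1) a = 0 := by
    intro z hz
    have hdet := hJinv z hz
    have hrow : ∀ a : Fin n, ∃ s, fderiv ℝ v z (Pi.single s 1) a ≠ 0 := by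
      intro a
      by_contra h
      push_neg at h
      have h0 : (Matrix.of fun a s : Fin n => fderiv ℝ v z (Pi.single s 1) a).det = 0 :=
        Matrix.det_eq_zero_of_row_eq_zero a (fun s => h s)
      rw [h0] at hdet
      exact not_isUnit_zero hdet
    choose f hfne using hrow
    have hzero : ∀ a s, s ≠ f a → fderiv ℝ v z (Pi.single s 1) a = 0 := by
      intro a s hs
      rcases mul_eq_zero.mp (hprod z hz a s (f a) hs) with h | h
      · exact h
      · exact absurd h (hfne a)
    have hsurj : Function.Surjective f := by
      intro t
      by_contra h
      push_neg at h
      have h0 : (Matrix.of fun a s : Fin n => fderiv ℝ v z (Pi.single s 1) a).det = 0 :=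
        Matrix.det_eq_zero_of_column_eq_zero t (fun a => hzero a t (fun ht => h a ht.symm))
      rw [h0] at hdet
      exact not_isUnit_zero hdet
    exact ⟨Equiv.ofBijective f (Finite.surjective_iff_bijective.mp hsurj),
      fun a s hs => hzero a s hs⟩
  -- the sparsity-pattern sets
  set S : Equiv.Perm (Fin n) → Set (Fin n → ℝ) := fun σ =>
    {z | z ∈ Z ∧ ∀ a s, s ≠ σ a → fderiv ℝ v z (Pi.single s 1) a = 0} with hS
  -- each `S σ` is open
  have hSopen : ∀ σ : Equiv.Perm (Fin n), IsOpen (S σ) := by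
    intro σ
    rw [isOpen_iff_forall_mem_open]
    rintro z ⟨hz, hP⟩
    -- diagonal entries are nonzero at z
    have hdiag : ∀ a : Fin n, fderiv ℝ v z (Pi.single (σ a) 1) a ≠ 0 := by
      intro a ha
      have hrow0 : ∀ s, fderiv ℝ v z (Pi.single s 1) a = 0 := by
        intro s
        by_cases hs : s = σ a
        · rw [hs]; exact ha
        · exact hP a s hs
      have h0 : (Matrix.of fun a s : Fin n => fderiv ℝ v z (Pi.single s 1) a).det = 0 :=
        Matrix.det_eq_zero_of_row_eq_zero a (fun s => hrow0 s)
      have hdet := hJinv z hz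
      rw [h0] at hdet
      exact not_isUnit_zero hdet
    refine ⟨Z ∩ ⋂ a : Fin n, Z ∩ (fun w => fderiv ℝ v w (Pi.single (σ a) 1) a) ⁻¹' {0}ᶜ,
      ?_, ?_, ?_⟩
    · rintro w ⟨hwZ, hw⟩
      simp only [Set.mem_iInter, Set.mem_inter_iff, Set.mem_preimage, Set.mem_compl_iff,
        Set.mem_singleton_iff] at hw
      refine ⟨hwZ, fun a s hs => ?_⟩
      rcases mul_eq_zero.mp (hprod w hwZ a s (σ a) hs) with h | h
      · exact h
      · exact absurd h (hw a).2
    · exact hZopen.inter (isOpen_iInter_of_finite fun a =>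
        (hcont a (σ a)).isOpen_inter_preimage hZopen isOpen_compl_singleton)
    · refine ⟨hz, ?_⟩
      simp only [Set.mem_iInter, Set.mem_inter_iff, Set.mem_preimage, Set.mem_compl_iff,
        Set.mem_singleton_iff]
      exact fun a => ⟨hz, hdiag a⟩
  -- disjointness
  have hdisj : ∀ σ τ : Equiv.Perm (Fin n), σ ≠ τ → ∀ z, z ∈ S σ → z ∈ S τ → False := by
    intro σ τ hne z hzσ hzτ
    obtain ⟨a, ha⟩ : ∃ a, σ a ≠ τ a := by
      by_contra h
      push_neg at h
      exact hne (Equiv.ext h)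
    have hrow0 : ∀ s, fderiv ℝ v z (Pi.single s 1) a = 0 := by
      intro s
      by_cases hs : s = σ a
      · exact hzτ.2 a s (hs ▸ ha)
      · exact hzσ.2 a s hs
    have h0 : (Matrix.of fun a s : Fin n => fderiv ℝ v z (Pi.single s 1) a).det = 0 :=
      Matrix.det_eq_zero_of_row_eq_zero a (fun s => hrow0 s)
    have hdet := hJinv z hzσ.1
    rw [h0] at hdet
    exact not_isUnit_zero hdet
  -- connectedness argument
  obtain ⟨z₀, hz₀⟩ := hZconn.nonempty
  obtain ⟨σ₀, hσ₀⟩ := key z₀ hz₀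
  refine ⟨σ₀, ?_⟩
  have hZsub : Z ⊆ S σ₀ := by
    by_contra hcon
    rw [Set.not_subset] at hcon
    obtain ⟨z, hz, hzU⟩ := hcon
    set V : Set (Fin n → ℝ) := ⋃ τ ∈ {τ : Equiv.Perm (Fin n) | τ ≠ σ₀}, S τ with hV
    have hVopen : IsOpen V := isOpen_biUnion fun τ _ => hSopen τ
    have hcover : Z ⊆ S σ₀ ∪ V := by
      intro w hw
      obtain ⟨τ, hτ⟩ := key w hw
      by_cases h : τ = σ₀
      · exact Or.inl ⟨hw, h ▸ hτ⟩
      · exact Or.inr (Set.mem_biUnion h ⟨hw, hτ⟩)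
    have hzV : z ∈ V := (hcover hz).resolve_left hzU
    obtain ⟨w, hwZ, hwU, hwV⟩ :=
      hZconn.isPreconnected (S σ₀) V (hSopen σ₀) hVopen hcover
        ⟨z₀, hz₀, hz₀, hσ₀⟩ ⟨z, hz, hzV⟩
    obtain ⟨τ, hτne, hτ⟩ := Set.mem_iUnion₂.mp hwV
    exact hdisj σ₀ τ (Ne.symm hτne) w hwU hτ
  exact fun z hz a s h => (hZsub hz).2 a s h
end

section
/- Let n, k ≥ 1. For each a ∈ {1, …, n} and b ∈ {1, …, k}, let T_{a,b}: ℝ → ℝ be differentiable functions such that for each fixed a, the derivatives T_{a,1}', …, T_{a,k}' admit no nontrivial vanishing linear combination: if β ∈ ℝ^k satisfies ∑_{b=1}^k β_b T_{a,b}'(t) = 0 for all t ∈ ℝ, then β = 0. Let D be an nk × nk array of real coefficients indexed by (i, l, a, b), and suppose there are functions T̄_{i,l}: ℝ → ℝ such that for all z = (z₁, …, zₙ) ∈ ℝⁿ and all (i, l): T̄_{i,l}(z_i) = ∑_{a=1}^n ∑_{b=1}^k D_{i,l,a,b} T_{a,b}(z_a). Then D_{i,l,s,b} = 0 whenever s ≠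 i; that is, D, viewed as an nk × nk matrix with k × k blocks indexed by (i, a), is block diagonal. -/
/-!
Moving only the coordinate `z_s` with `s ≠ i` leaves `T̄_{i,l}(z_i)` and every summand with
`a ≠ s` unchanged, so `∑_b D_{i,l,s,b} T_{s,b}` is constant. Its derivative
`∑_b D_{i,l,s,b} T_{s,b}'` therefore vanishes identically, and the independence of the
`T_{s,b}'` forces `D_{i,l,s,b} = 0`.
-/

open Finset Function

theorem summand_eq_of_forall_eval_eq_sum {ι α β : Type*} [Fintype ι] [DecidableEq ι]
    [AddCancelCommMonoid β] {g : α → β} {f : ι → α → β} {i s : ι}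
    (h : ∀ z : ι → α, g (z i) = ∑ a, f a (z a)) (hs : s ≠ i) (t t' : α) :
    f s t = f s t' := by
  have hsum : ∀ x, ∑ a, f a (update (fun _ => t) s x a) =
      f s x + ∑ a ∈ univ \ {s}, f a t := fun x => by
    simp_rw [apply_update f, sum_update_of_mem (mem_univ s)]
  have ht := h (update (fun _ => t) s t)
  have ht' := h (update (fun _ => t) s t')
  rw [update_of_ne hs.symm, hsum] at ht ht'
  exact add_right_cancel (ht.symm.trans ht')

theorem sum_mul_deriv_eq_zero_of_sum_mul_const {ι 𝕜 : Type*} [Fintype ι]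
    [NontriviallyNormedField 𝕜] {T : ι → 𝕜 → 𝕜} (hT : ∀ b, Differentiable 𝕜 (T b)) (β : ι → 𝕜)
    (hconst : ∀ t t', ∑ b, β b * T b t = ∑ b, β b * T b t') (t : 𝕜) :
    ∑ b, β b * deriv (T b) t = 0 := by
  have hderiv : HasDerivAt (fun t => ∑ b, β b * T b t) (∑ b, β b * deriv (T b) t) t :=
    HasDerivAt.fun_sum fun b _ => (hT b t).hasDerivAt.const_mul (β b)
  rw [funext (hconst · 0)] at hderiv
  exact (hasDerivAt_const t _).unique hderiv |>.symm

theorem coeffs_vanish_off_block_diagonal_general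
    (n k : ℕ)
    (T : Fin n → Fin k → ℝ → ℝ)
    (hdiff : ∀ a b, Differentiable ℝ (T a b))
    (hindep : ∀ (a : Fin n) (β : Fin k → ℝ),
      (∀ t : ℝ, ∑ b, β b * deriv (T a b) t = 0) → β = 0)
    (D : Fin n → Fin k → Fin n → Fin k → ℝ)
    (Tbar : Fin n → Fin k → ℝ → ℝ)
    (h : ∀ (z : Fin n → ℝ) (i : Fin n) (l : Fin k),
      Tbar i l (z i) = ∑ a, ∑ b, D i l a b * T a b (z a)) :
    ∀ (i : Fin n) (l : Fin k) (s : Fin n) (b : Fin k), s ≠ i → D i l s b = 0 := by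
  intro i l s b hsi
  have hconst : ∀ t t', ∑ b, D i l s b * T s b t = ∑ b, D i l s b * T s b t' :=
    summand_eq_of_forall_eval_eq_sum (f := fun a x => ∑ b, D i l a b * T a b x)
      (fun z => h z i l) hsi
  exact congrFun (hindep s _ (sum_mul_deriv_eq_zero_of_sum_mul_const (hdiff s) _ hconst)) b

/-- **Lemma: the linear indeterminacy between two pointwise families of sufficient statistics
is block diagonal.**  If each univariate function `T̄_{i,l}` of `z_i` equals the linear
combination `∑_{a,b} D_{i,l,a,b} T_{a,b}(z_a)` for all `z ∈ ℝⁿ`, and for each `a` the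
derivatives `T_{a,1}', …, T_{a,k}'` admit no nontrivial vanishing linear combination, then
`D_{i,l,s,b} = 0` whenever `s ≠ i`. -/
theorem coeffs_vanish_off_block_diagonal
    (n k : ℕ) (hn : 1 ≤ n) (hk : 1 ≤ k)
    (T : Fin n → Fin k → ℝ → ℝ)
    (hdiff : ∀ a b, Differentiable ℝ (T a b))
    (hindep : ∀ (a : Fin n) (β : Fin k → ℝ),
      (∀ t : ℝ, ∑ b, β b * deriv (T a b) t = 0) → β = 0)
    (D : Fin n → Fin k → Fin n → Fin k → ℝ)
    (Tbar : Fin n → Fin k → ℝ → ℝ)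
    (h : ∀ (z : Fin n → ℝ) (i : Fin n) (l : Fin k),
      Tbar i l (z i) = ∑ a, ∑ b, D i l a b * T a b (z a)) :
    ∀ (i : Fin n) (l : Fin k) (s : Fin n) (b : Fin k), s ≠ i → D i l s b = 0 :=
  coeffs_vanish_off_block_diagonal_general n k T hdiff hindep D Tbar h
end

section
/- Let z = (z₁, …, z_d) be a random vector with mutually independent components, where each z_i has a continuous, strictly increasing cumulative distribution function F_i. Let Φ denote the standard normal cumulative distribution function, and let M be any orthogonal d × d matrix. Define h: ℝ^d → ℝ^d by first mapping w_i = Φ⁻¹(F_i(z_i)) componentwise, then setting w' = M w, then mapping back h(z)_i = F_i⁻¹(Φ(w'_i)). Then the random vector h(z) has exactly the same joint distribution as z. In particular, deep latent-variable models with any factorized (unconditional) prior are unidentifiable. -/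
/-!
By the probability integral transform, `Φ⁻¹ ∘ Fᵢ` pushes `νᵢ` forward to the standard Gaussian
and `Fᵢ⁻¹ ∘ Φ` pushes the standard Gaussian back to `νᵢ`. Hence `h` transports `⊗ νᵢ` to the
standard Gaussian on `ℝᵈ`, rotates it, and transports it back; the middle step changes nothing
because the standard Gaussian on a Euclidean space is invariant under linear isometries.
-/

open MeasureTheory ProbabilityTheory Matrix

/-- The standard normal cumulative distribution function `Φ`. -/
noncomputable def stdNormalCdf (t : ℝ) : ℝ := ((gaussianReal 0 1) (Set.Iic t)).toReal

open Set Function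

namespace ProbabilityTheory

section Cdf

lemma continuous_cdf (μ : Measure ℝ) [IsProbabilityMeasure μ] [NullSingletonClass μ] :
    Continuous (cdf μ) := by
  refine continuous_iff_continuousAt.2 fun x ↦
    continuousAt_iff_continuous_left_right.2 ⟨?_, (cdf μ).right_continuous x⟩
  rw [← continuousWithinAt_Iio_iff_Iic, (monotone_cdf μ).continuousWithinAt_Iio_iff_leftLim_eq]
  have hjump := (cdf μ).measure_singleton x
  rw [measure_cdf, measure_singleton, eq_comm, ENNReal.ofReal_eq_zero, sub_nonpos] at hjump
  exact le_antisymm ((monotone_cdf μ).leftLim_le le_rfl) hjump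

lemma strictMono_cdf (μ : Measure ℝ) [IsProbabilityMeasure μ] [μ.IsOpenPosMeasure] :
    StrictMono (cdf μ) := by
  intro a b hab
  have hpos : 0 < μ (Ioc a b) :=
    (Measure.measure_Ioo_pos μ |>.2 hab).trans_le (measure_mono Ioo_subset_Ioc_self)
  rwa [← measure_cdf μ, StieltjesFunction.measure_Ioc, ENNReal.ofReal_pos, sub_pos] at hpos

variable {μ : Measure ℝ}

lemma cdf_mem_Ioo (hm : StrictMono (cdf μ)) (x : ℝ) : cdf μ x ∈ Ioo 0 1 :=
  ⟨(cdf_nonneg μ (x - 1)).trans_lt (hm (sub_one_lt x)),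
    (hm (lt_add_one x)).trans_le (cdf_le_one μ (x + 1))⟩

lemma Ioo_subset_range_cdf (hc : Continuous (cdf μ)) : Ioo 0 1 ⊆ range (cdf μ) := fun _ hy ↦
  mem_range_of_exists_le_of_exists_ge hc
    (((tendsto_cdf_atBot μ).eventually_le_const hy.1).exists)
    (((tendsto_cdf_atTop μ).eventually_const_le hy.2).exists)

lemma cdf_invFun_cdf (hc : Continuous (cdf μ)) {y : ℝ} (hy : y ∈ Ioo 0 1) :
    cdf μ (invFun (cdf μ) y) = y :=
  invFun_eq (Ioo_subset_range_cdf hc hy)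

end Cdf

lemma measurePreserving_invFun_cdf_comp_cdf {μ ρ : Measure ℝ} [IsProbabilityMeasure μ]
    [IsProbabilityMeasure ρ] (hμc : Continuous (cdf μ)) (hμm : StrictMono (cdf μ))
    (hρc : Continuous (cdf ρ)) (hρm : StrictMono (cdf ρ)) :
    MeasurePreserving (fun x ↦ invFun (cdf ρ) (cdf μ x)) μ ρ := by
  set G := fun x ↦ invFun (cdf ρ) (cdf μ x)
  have hG : ∀ x, cdf ρ (G x) = cdf μ x := fun x ↦ cdf_invFun_cdf hρc (cdf_mem_Ioo hμm x)
  have hGm : StrictMono G := fun a b hab ↦ hρm.lt_iff_lt.1 (by rw [hG, hG]; exact hμm hab)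
  refine ⟨hGm.monotone.measurable, Measure.ext_of_Iic _ _ fun t ↦ ?_⟩
  obtain ⟨x₀, hx₀⟩ := Ioo_subset_range_cdf hμc (cdf_mem_Ioo hρm t)
  have hpre : G ⁻¹' Iic t = Iic x₀ := by
    ext x
    rw [mem_preimage, mem_Iic, mem_Iic, ← hρm.le_iff_le, hG, ← hx₀, hμm.le_iff_le]
  rw [Measure.map_apply hGm.monotone.measurable measurableSet_Iic, hpre, ← ofReal_cdf, hx₀,
    ofReal_cdf]

lemma measurePreserving_mulVec_pi_gaussianReal {ι : Type*} [Fintype ι] [DecidableEq ι]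
    {M : Matrix ι ι ℝ} (hM : M ∈ orthogonalGroup ι ℝ) :
    MeasurePreserving M.mulVec (Measure.pi fun _ : ι ↦ gaussianReal 0 1)
      (Measure.pi fun _ ↦ gaussianReal 0 1) := by
  refine ⟨by fun_prop, ?_⟩
  let e : EuclideanSpace ℝ ι ≃ₗᵢ[ℝ] EuclideanSpace ℝ ι :=
    Unitary.linearIsometryEquiv ⟨toEuclideanCLM (n := ι) (𝕜 := ℝ) M, Unitary.map_mem _ hM⟩
  have he : WithLp.toLp 2 ∘ M.mulVec = e ∘ WithLp.toLp 2 := rfl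
  refine (MeasurableEquiv.toLp 2 (ι → ℝ)).map_measurableEquiv_injective ?_
  change Measure.map (WithLp.toLp 2) _ = Measure.map (WithLp.toLp 2) _
  rw [Measure.map_map (by fun_prop) (by fun_prop), he,
    ← Measure.map_map (by fun_prop) (by fun_prop), map_pi_eq_stdGaussian, stdGaussian_map]

end ProbabilityTheory

/-- **Theorem (unidentifiability with factorized priors): Gaussianizing each independent
component via `Φ⁻¹ ∘ Fᵢ`, rotating by an orthogonal matrix `M`, and mapping back via
`Fᵢ⁻¹ ∘ Φ` leaves the joint law of the latent vector unchanged.** -/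
theorem factorized_prior_unidentifiable
    (d : ℕ) (ν : Fin d → Measure ℝ) [∀ i, IsProbabilityMeasure (ν i)]
    (F : Fin d → ℝ → ℝ)
    (hF : ∀ i t, F i t = ((ν i) (Set.Iic t)).toReal)
    (hFcont : ∀ i, Continuous (F i)) (hFmono : ∀ i, StrictMono (F i))
    (M : Matrix (Fin d) (Fin d) ℝ) (hM : Mᵀ * M = 1) :
    Measure.map (fun z : Fin d → ℝ => fun i : Fin d =>
        Function.invFun (F i)
          (stdNormalCdf ((M.mulVec fun j : Fin d =>
            Function.invFun stdNormalCdf (F j (z j))) i)))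
      (Measure.pi ν) = Measure.pi ν := by
  obtain rfl : F = fun i ↦ ⇑(cdf (ν i)) :=
    funext₂ fun i t ↦ by rw [hF, cdf_eq_real, measureReal_def]
  have hΦ : stdNormalCdf = cdf (gaussianReal 0 1) :=
    funext fun t ↦ by rw [cdf_eq_real, measureReal_def, stdNormalCdf]
  have := nullSingletonClass_gaussianReal (μ := 0) one_ne_zero
  have := (gaussianReal_absolutelyContinuous' 0 one_ne_zero).isOpenPosMeasure
  rw [hΦ]
  have toGaussian := measurePreserving_pi ν (fun _ ↦ gaussianReal 0 1) fun i ↦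
    measurePreserving_invFun_cdf_comp_cdf (hFcont i) (hFmono i) (continuous_cdf _)
      (strictMono_cdf _)
  have rotate := measurePreserving_mulVec_pi_gaussianReal ((mem_orthogonalGroup_iff' _ _).2 hM)
  have fromGaussian := measurePreserving_pi (fun _ ↦ gaussianReal 0 1) ν fun i ↦
    measurePreserving_invFun_cdf_comp_cdf (continuous_cdf _) (strictMono_cdf _) (hFcont i)
      (hFmono i)
  exact ((fromGaussian.comp rotate).comp toGaussian).map_eq
end
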